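/- arXiv:2303.07037 — 9 statements merged into one kernel-verified Lean document; each statement's English description precedes it below -/
import Mathlib

section
/- The set of all ∇-points of a Banach space X is a closed subset of X. -/
/-! A `δ`-perturbation of `x` changes `f x` by at most `δ`, so if the slice `S(f, α)` misses
a limit `x` of `∇`-points, the smaller slice `S(f, α - δ)` misses a `∇`-point `x'` within `δ`
of `x`. The points of that slice nearly at distance `2` from `x'` lie in `S(f, α)` and are
nearly at distance `2` from `x`; the sphere being closed gives `‖x‖ = 1`. -/

open scoped ENNReal

variable {X : Type*} [NormedAddCommGroup X] [NormedSpace ℝ X]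

/-- The ballSlice of the closed unit ball of `X` determined by the functional `f` and `α`:
`S(f, α) = {y ∈ B_X : f y > 1 - α}`. -/
def ballSlice (f : X →L[ℝ] ℝ) (α : ℝ) : Set X := {y | ‖y‖ ≤ 1 ∧ 1 - α < f y}

/-- `x` is a Daugavet point: `sup_{y ∈ S} ‖x - y‖ = 2` for every ballSlice `S` of `B_X`. -/
def IsDaugavetPoint (x : X) : Prop :=
  ‖x‖ = 1 ∧ ∀ (f : X →L[ℝ] ℝ) (α : ℝ), ‖f‖ = 1 → 0 < α →
    ∀ ε > (0 : ℝ), ∃ y ∈ ballSlice f α, 2 - ε < ‖x - y‖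

/-- `x` is a `∇`-point: `sup_{y ∈ S} ‖x - y‖ = 2` for every ballSlice `S` of `B_X`
not containing `x`. -/
def IsNablaPoint (x : X) : Prop :=
  ‖x‖ = 1 ∧ ∀ (f : X →L[ℝ] ℝ) (α : ℝ), ‖f‖ = 1 → 0 < α → x ∉ ballSlice f α →
    ∀ ε > (0 : ℝ), ∃ y ∈ ballSlice f α, 2 - ε < ‖x - y‖

/-- `x` is a `𝔇`-point: `sup_{y ∈ S(f,α)} ‖x - y‖ = 2` for every norm-one functional `f`
supporting `x` (i.e. `f x = 1`) and every `α > 0`. -/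
def IsDPoint (x : X) : Prop :=
  ‖x‖ = 1 ∧ ∀ (f : X →L[ℝ] ℝ) (α : ℝ), ‖f‖ = 1 → f x = 1 → 0 < α →
    ∀ ε > (0 : ℝ), ∃ y ∈ ballSlice f α, 2 - ε < ‖x - y‖

/-- `x` is a denting point of `B_X`: it belongs to slices of arbitrarily small diameter. -/
def IsDentingPoint (x : X) : Prop :=
  ‖x‖ ≤ 1 ∧ ∀ ε > (0 : ℝ), ∃ (f : X →L[ℝ] ℝ) (α : ℝ), ‖f‖ = 1 ∧ 0 < α ∧
    x ∈ ballSlice f α ∧ ∀ y ∈ ballSlice f α, ∀ z ∈ ballSlice f α, ‖y - z‖ < ε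

/-- `x` is a strongly exposed point of `B_X`: some norm-one functional `f` with `f x = 1`
generates slices containing `x` of arbitrarily small diameter. -/
def IsStronglyExposedPoint (x : X) : Prop :=
  ‖x‖ = 1 ∧ ∃ f : X →L[ℝ] ℝ, ‖f‖ = 1 ∧ f x = 1 ∧ ∀ ε > (0 : ℝ), ∃ α > (0 : ℝ),
    ∀ y ∈ ballSlice f α, ∀ z ∈ ballSlice f α, ‖y - z‖ < ε


theorem ballSlice_mono (f : X →L[ℝ] ℝ) {α β : ℝ} (h : α ≤ β) : ballSlice f α ⊆ ballSlice f β :=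
  fun _ ⟨hy, hfy⟩ => ⟨hy, by linarith⟩

theorem notMem_ballSlice_sub_of_dist_le {f : X →L[ℝ] ℝ} (hf : ‖f‖ ≤ 1) {α δ : ℝ} {x x' : X}
    (hx : ‖x‖ ≤ 1) (hxS : x ∉ ballSlice f α) (hd : dist x' x ≤ δ) :
    x' ∉ ballSlice f (α - δ) := by
  have hfx : f x ≤ 1 - α := le_of_not_gt fun h => hxS ⟨hx, h⟩
  have hfd : f x' - f x ≤ δ :=
    calc f x' - f x ≤ ‖f (x' - x)‖ := by rw [map_sub]; exact le_abs_self _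
      _ ≤ ‖f‖ * ‖x' - x‖ := f.le_opNorm _
      _ ≤ 1 * δ := by rw [← dist_eq_norm]; gcongr
      _ = δ := one_mul δ
  exact fun h => by linarith [h.2]

theorem IsNablaPoint.exists_mem_ballSlice_of_dist_le {x' x : X} (hx' : IsNablaPoint x')
    {f : X →L[ℝ] ℝ} (hf : ‖f‖ = 1) {α δ ε : ℝ} (hδα : δ < α) (hε : 0 < ε)
    (hx : ‖x‖ ≤ 1) (hxS : x ∉ ballSlice f α) (hd : dist x' x ≤ δ) :
    ∃ y ∈ ballSlice f α, 2 - ε - δ < ‖x - y‖ := by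
  obtain ⟨y, hyS, hy⟩ := hx'.2 f (α - δ) hf (by linarith)
    (notMem_ballSlice_sub_of_dist_le hf.le hx hxS hd) ε hε
  refine ⟨y, ballSlice_mono f (by linarith [dist_nonneg.trans hd]) hyS, ?_⟩
  calc 2 - ε - δ < ‖x' - y‖ - dist x' x := by linarith
    _ ≤ ‖x - y‖ := by
      rw [dist_eq_norm]
      linarith [norm_sub_le_norm_sub_add_norm_sub x' x y]

theorem isNablaPoint_of_forall_dist_lt {x : X} (hx : ‖x‖ = 1)
    (h : ∀ δ > 0, ∃ x', IsNablaPoint x' ∧ dist x' x < δ) : IsNablaPoint x := by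
  refine ⟨hx, fun f α hf hα hxS ε hε => ?_⟩
  obtain ⟨x', hx', hd⟩ := h (min (α / 2) (ε / 2)) (by positivity)
  obtain ⟨y, hyS, hy⟩ := hx'.exists_mem_ballSlice_of_dist_le hf
    (δ := min (α / 2) (ε / 2)) (ε := ε / 2) (by linarith [min_le_left (α / 2) (ε / 2)])
    (by positivity) hx.le hxS hd.le
  exact ⟨y, hyS, by linarith [min_le_right (α / 2) (ε / 2)]⟩

theorem setOf_isNablaPoint_subset_sphere : {x : X | IsNablaPoint x} ⊆ Metric.sphere 0 1 :=
  fun _ hx => mem_sphere_zero_iff_norm.mpr hx.1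

theorem isClosed_setOf_isNablaPoint_general
    {X : Type*} [NormedAddCommGroup X] [NormedSpace ℝ X] :
    IsClosed {x : X | IsNablaPoint x} := by
  refine isClosed_of_closure_subset fun x hx => ?_
  have hx1 : ‖x‖ = 1 := mem_sphere_zero_iff_norm.mp <|
    (closure_minimal setOf_isNablaPoint_subset_sphere Metric.isClosed_sphere) hx
  exact isNablaPoint_of_forall_dist_lt hx1 fun δ hδ => by
    obtain ⟨x', hx', hd⟩ := Metric.mem_closure_iff.mp hx δ hδ
    exact ⟨x', hx', by rwa [dist_comm]⟩

/-- The set of all `∇`-points of a Banach space `X` is a closed subset of `X`. -/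
theorem isClosed_setOf_isNablaPoint
    {X : Type*} [NormedAddCommGroup X] [NormedSpace ℝ X] [CompleteSpace X] :
    IsClosed {x : X | IsNablaPoint x} :=
  isClosed_setOf_isNablaPoint_general
end

section
/- A Banach space X of dimension greater than 1 has the Daugavet property if and only if every point of its unit sphere is a ∇-point. -/
open scoped ENNReal

variable {X : Type*} [NormedAddCommGroup X] [NormedSpace ℝ X]

/-
A ∇-point `x` already has points at distance almost `2` in every slice `S(f, α)` through it with
`f x < 1`, because the smaller slice `{f > f x}` misses `x`. The remaining slices are those with
`f x = 1`. There the dimension assumption provides a sphere point `u ≠ x` close to `x`; tilting `f`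
by a small multiple of a functional norming `x - u` gives a slice strictly above `u` that still lies
in `S(f, α)`, and the ∇-property at `u` produces points of it at distance almost `2` from `u`, hence
from `x`.
-/

lemma ContinuousLinearMap.abs_apply_le_norm_of_norm_le_one (f : X →L[ℝ] ℝ) {y : X}
    (hy : ‖y‖ ≤ 1) : |f y| ≤ ‖f‖ := by
  simpa using f.le_opNorm_of_le hy

lemma exists_norm_eq_one_ne_norm_sub_le (hdim : 1 < Module.rank ℝ X) {x : X} (hx : ‖x‖ = 1)
    {ρ : ℝ} (hρ : 0 < ρ) : ∃ u : X, ‖u‖ = 1 ∧ u ≠ x ∧ ‖u - x‖ ≤ ρ := by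
  have hx_sphere : x ∈ Metric.sphere (0 : X) 1 := by simpa using hx
  have hx_ne : x ≠ -x := fun h ↦ ne_neg_of_mem_unit_sphere ℝ ⟨x, hx_sphere⟩ (Subtype.ext h)
  have hacc := (isPreconnected_sphere hdim 0 1).preperfect_of_nontrivial
    (Set.nontrivial_of_mem_mem_ne hx_sphere (by simpa using hx) hx_ne) x hx_sphere
  obtain ⟨u, ⟨hu_near, hu_sphere⟩, hux⟩ :=
    accPt_iff_nhds.mp hacc _ (Metric.closedBall_mem_nhds x hρ)
  exact ⟨u, by simpa using hu_sphere, hux, by simpa [dist_eq_norm] using hu_near⟩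

lemma IsDaugavetPoint.isNablaPoint {x : X} (hx : IsDaugavetPoint x) : IsNablaPoint x :=
  ⟨hx.1, fun f α hf hα _ ↦ hx.2 f α hf hα⟩

lemma IsNablaPoint.exists_lt_apply_lt_norm_sub {u : X} (hu : IsNablaPoint u) {F : X →L[ℝ] ℝ}
    (hFu : F u < ‖F‖) {ε : ℝ} (hε : 0 < ε) : ∃ y : X, ‖y‖ ≤ 1 ∧ F u < F y ∧ 2 - ε < ‖u - y‖ := by
  have hF : 0 < ‖F‖ := by
    have := abs_le.mp (F.abs_apply_le_norm_of_norm_le_one hu.1.le)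
    linarith
  set g : X →L[ℝ] ℝ := (‖F‖⁻¹ : ℝ) • F
  have hg_lt_iff {v w : X} : g v < g w ↔ F v < F w := by
    simp [g, mul_lt_mul_iff_right₀ (inv_pos.mpr hF)]
  have hgu : g u < 1 := by
    simpa [g, inv_mul_lt_iff₀ hF] using hFu
  have hu_notMem : u ∉ ballSlice g (1 - g u) := by simp [ballSlice]
  obtain ⟨y, ⟨hy, hgy⟩, hdist⟩ :=
    hu.2 g _ (norm_smul_inv_norm (norm_ne_zero_iff.mp hF.ne')) (by linarith) hu_notMem ε hε
  exact ⟨y, hy, hg_lt_iff.mp (by linarith), hdist⟩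

lemma IsNablaPoint.isDaugavetPoint_of_isDPoint {x : X} (hnabla : IsNablaPoint x)
    (hD : IsDPoint x) : IsDaugavetPoint x := by
  refine ⟨hnabla.1, fun f α hf hα ε hε ↦ ?_⟩
  by_cases hxS : x ∈ ballSlice f α
  · have hfx : f x ≤ 1 := hf ▸ (abs_le.mp (f.abs_apply_le_norm_of_norm_le_one hnabla.1.le)).2
    rcases hfx.lt_or_eq with hfx | hfx
    · obtain ⟨y, hy, hfy, hdist⟩ := hnabla.exists_lt_apply_lt_norm_sub (hf ▸ hfx) hε
      exact ⟨y, ⟨hy, hxS.2.trans hfy⟩, hdist⟩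
    · exact hD.2 f α hf hfx hα ε hε
  · exact hnabla.2 f α hf hα hxS ε hε

lemma isDPoint_of_forall_isNablaPoint (hdim : 1 < Module.rank ℝ X)
    (hnabla : ∀ u : X, ‖u‖ = 1 → IsNablaPoint u) {x : X} (hx : ‖x‖ = 1) : IsDPoint x := by
  refine ⟨hx, fun f α hf hfx hα ε hε ↦ ?_⟩
  obtain ⟨u, hu, hux, hux_le⟩ :=
    exists_norm_eq_one_ne_norm_sub_le hdim hx (lt_min (half_pos hε) (by positivity : 0 < α / 4))
  have hxu : 0 < ‖x - u‖ := norm_pos_iff.mpr (sub_ne_zero.mpr hux.symm)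
  obtain ⟨φ, hφ, hφxu⟩ := exists_dual_vector ℝ (x - u) hxu.ne'
  have hbound {ψ : X →L[ℝ] ℝ} {v : X} (hψ : ‖ψ‖ = 1) (hv : ‖v‖ ≤ 1) : |ψ v| ≤ 1 :=
    hψ ▸ ψ.abs_apply_le_norm_of_norm_le_one hv
  have hfu : 1 - α / 4 ≤ f u := by
    have h := f.le_opNorm (u - x)
    rw [hf, one_mul, map_sub, hfx, Real.norm_eq_abs] at h
    linarith [(abs_le.mp h).1, hux_le.trans (min_le_right _ _)]
  set F : X →L[ℝ] ℝ := f + (α / 4) • φ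
  have hFu_lt_Fx : F u < F x := by
    have hφxu' : φ x - φ u = ‖x - u‖ := by simpa [map_sub] using hφxu
    have hfu_le : f u ≤ 1 := (abs_le.mp (hbound hf hu.le)).2
    simp only [F, add_apply, smul_apply, smul_eq_mul]
    nlinarith
  have hFx_le : F x ≤ ‖F‖ := (abs_le.mp (F.abs_apply_le_norm_of_norm_le_one hx.le)).2
  obtain ⟨y, hy, hFy, hdist⟩ :=
    (hnabla u hu).exists_lt_apply_lt_norm_sub (hFu_lt_Fx.trans_le hFx_le) (half_pos hε)
  refine ⟨y, ⟨hy, ?_⟩, ?_⟩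
  · have hφu : -1 ≤ φ u := (abs_le.mp (hbound hφ hu.le)).1
    have hφy : φ y ≤ 1 := (abs_le.mp (hbound hφ hy)).2
    simp only [F, add_apply, smul_apply, smul_eq_mul] at hFy
    nlinarith
  · linarith [norm_sub_le_norm_sub_add_norm_sub u x y, hux_le.trans (min_le_left _ _)]

theorem daugavetProperty_iff_forall_isNablaPoint_general
    {X : Type*} [NormedAddCommGroup X] [NormedSpace ℝ X]
    (hdim : 1 < Module.rank ℝ X) :
    (∀ x : X, ‖x‖ = 1 → IsDaugavetPoint x) ↔ (∀ x : X, ‖x‖ = 1 → IsNablaPoint x) :=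
  ⟨fun h x hx ↦ (h x hx).isNablaPoint,
    fun h x hx ↦ (h x hx).isDaugavetPoint_of_isDPoint (isDPoint_of_forall_isNablaPoint hdim h hx)⟩

/-- A Banach space of dimension greater than `1` has the Daugavet property (every point of the
unit sphere is a Daugavet point) if and only if every point of its unit sphere is a `∇`-point. -/
theorem daugavetProperty_iff_forall_isNablaPoint
    {X : Type*} [NormedAddCommGroup X] [NormedSpace ℝ X] [CompleteSpace X]
    (hdim : 1 < Module.rank ℝ X) :
    (∀ x : X, ‖x‖ = 1 → IsDaugavetPoint x) ↔ (∀ x : X, ‖x‖ = 1 → IsNablaPoint x) :=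
  daugavetProperty_iff_forall_isNablaPoint_general hdim
end

section
/- If x is a ∇-point of the unit ball of a Banach space X and y is a denting point of B_X with y ≠ x, then ‖x - y‖ = 2. -/
open scoped ENNReal

variable {X : Type*} [NormedAddCommGroup X] [NormedSpace ℝ X]

/-!
A denting point `y ≠ x` lies in slices of diameter smaller than both `ε` and `‖y - x‖`; such a
slice misses `x`, so the `∇`-property gives a point `z` of it with `‖x - z‖ > 2 - ε`, while
`‖y - z‖ < ε`.
-/

theorem norm_sub_le_two_of_norm_le_one {E : Type*} [SeminormedAddGroup E] {x y : E}
    (hx : ‖x‖ ≤ 1) (hy : ‖y‖ ≤ 1) : ‖x - y‖ ≤ 2 :=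
  (norm_sub_le x y).trans (by linarith)

theorem IsDentingPoint.exists_ballSlice_not_mem {x y : X} (hy : IsDentingPoint y) (hxy : y ≠ x)
    {ε : ℝ} (hε : 0 < ε) :
    ∃ (f : X →L[ℝ] ℝ) (α : ℝ), ‖f‖ = 1 ∧ 0 < α ∧ x ∉ ballSlice f α ∧
      ∀ z ∈ ballSlice f α, ‖y - z‖ < ε := by
  have hdist : 0 < ‖y - x‖ := norm_pos_iff.2 (sub_ne_zero.2 hxy)
  obtain ⟨f, α, hf, hα, hyS, hdiam⟩ := hy.2 (min ε ‖y - x‖) (lt_min hε hdist)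
  refine ⟨f, α, hf, hα, fun hxS => ?_, fun z hz => (hdiam y hyS z hz).trans_le (min_le_left _ _)⟩
  exact (hdiam y hyS x hxS).not_ge (min_le_right _ _)

theorem IsNablaPoint.two_lt_norm_sub_add {x y : X} (hx : IsNablaPoint x) (hy : IsDentingPoint y)
    (hxy : y ≠ x) {ε : ℝ} (hε : 0 < ε) : 2 < ‖x - y‖ + ε := by
  obtain ⟨f, α, hf, hα, hxS, hnear⟩ := hy.exists_ballSlice_not_mem hxy (half_pos hε)
  obtain ⟨z, hz, hfar⟩ := hx.2 f α hf hα hxS (ε / 2) (half_pos hε)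
  calc 2 < ‖x - z‖ + ε / 2 := by linarith
    _ ≤ ‖x - y‖ + ‖y - z‖ + ε / 2 := by gcongr; exact norm_sub_le_norm_sub_add_norm_sub x y z
    _ < ‖x - y‖ + ε := by linarith [hnear z hz]

theorem IsNablaPoint.dist_denting_eq_two_general
    {X : Type*} [NormedAddCommGroup X] [NormedSpace ℝ X]
    {x y : X} (hx : IsNablaPoint x) (hy : IsDentingPoint y) (hxy : y ≠ x) :
    ‖x - y‖ = 2 :=
  le_antisymm (norm_sub_le_two_of_norm_le_one hx.1.le hy.1)
    (le_of_forall_pos_lt_add fun _ hε => hx.two_lt_norm_sub_add hy hxy hε)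

/-- If `x` is a `∇`-point and `y` is a denting point of `B_X` with `y ≠ x`,
then `‖x - y‖ = 2`. -/
theorem IsNablaPoint.dist_denting_eq_two
    {X : Type*} [NormedAddCommGroup X] [NormedSpace ℝ X] [CompleteSpace X]
    {x y : X} (hx : IsNablaPoint x) (hy : IsDentingPoint y) (hxy : y ≠ x) :
    ‖x - y‖ = 2 :=
  IsNablaPoint.dist_denting_eq_two_general hx hy hxy
end

section
/- If X is a strictly convex Banach space and x ∈ S_X is a ∇-point, then every denting point of B_X belongs to {x, -x}. -/
open scoped ENNReal

variable {X : Type*} [NormedAddCommGroup X] [NormedSpace ℝ X]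

/-!
A denting point `y ≠ x` lies in slices of diameter smaller than `‖y - x‖`; these slices miss `x`,
so the `∇`-property of `x` puts points at distance almost `2` from `x` inside them, hence
`‖x - y‖ = 2`. In a strictly convex space two points of the unit ball at distance `2` are
antipodal.
-/

theorem eq_neg_of_norm_sub_eq_two [StrictConvexSpace ℝ X] {x y : X} (hx : ‖x‖ ≤ 1)
    (hy : ‖y‖ ≤ 1) (hxy : ‖x - y‖ = 2) : y = -x := by
  have htri : ‖x - y‖ ≤ ‖x‖ + ‖y‖ := norm_sub_le x y
  have hx1 : ‖x‖ = 1 := by linarith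
  have hy1 : ‖y‖ = 1 := by linarith
  have hsum : ‖x + -y‖ = ‖x‖ + ‖-y‖ := by
    rw [← sub_eq_add_neg, norm_neg, hxy, hx1, hy1]; norm_num
  rw [eq_of_norm_eq_of_norm_add_eq (by rw [norm_neg, hx1, hy1]) hsum, neg_neg]

theorem IsNablaPoint.norm_sub_eq_two {x y : X} (hx : IsNablaPoint x) (hy : IsDentingPoint y)
    (hxy : y ≠ x) : ‖x - y‖ = 2 := by
  refine le_antisymm ?_ (le_of_forall_pos_lt_add fun ε hε => hx.two_lt_norm_sub_add hy hxy hε)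
  calc ‖x - y‖ ≤ ‖x‖ + ‖y‖ := norm_sub_le x y
    _ ≤ 2 := by linarith [hx.1, hy.1]

theorem IsNablaPoint.dentingPoint_mem_pair_of_strictConvex_general
    {X : Type*} [NormedAddCommGroup X] [NormedSpace ℝ X]
    [StrictConvexSpace ℝ X] {x : X} (hx : IsNablaPoint x) :
    ∀ y : X, IsDentingPoint y → y = x ∨ y = -x := by
  intro y hy
  by_cases hxy : y = x
  · exact Or.inl hxy
  · exact Or.inr (eq_neg_of_norm_sub_eq_two hx.1.le hy.1 (hx.norm_sub_eq_two hy hxy))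

/-- In a strictly convex Banach space, if `x` is a `∇`-point, then every denting point of the
unit ball belongs to `{x, -x}`. -/
theorem IsNablaPoint.dentingPoint_mem_pair_of_strictConvex
    {X : Type*} [NormedAddCommGroup X] [NormedSpace ℝ X] [CompleteSpace X]
    [StrictConvexSpace ℝ X] {x : X} (hx : IsNablaPoint x) :
    ∀ y : X, IsDentingPoint y → y = x ∨ y = -x :=
  IsNablaPoint.dentingPoint_mem_pair_of_strictConvex_general hx
end

section
/- Every element of the unit vector basis of ℓ₁ is a ∇-point of the unit ball of ℓ₁. -/
open scoped ENNReal

variable {X : Type*} [NormedAddCommGroup X] [NormedSpace ℝ X]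

/- A norm-one functional `f` on `ℓ₁` has `sup_m |f e_m| = ‖f‖ = 1`, so every slice `S(f, α)`
contains a signed basis vector `±e_m`. If the slice misses `e_n`, then `±e_m ≠ e_n`, and two
distinct signed basis vectors are at distance `2` in `ℓ₁`. -/

namespace lp

variable {ι 𝕜 F : Type*} {E : ι → Type*} [∀ i, NormedAddCommGroup (E i)]

theorem hasSum_norm_one (x : lp E 1) : HasSum (fun i => ‖x i‖) ‖x‖ := by
  simpa using lp.hasSum_norm (p := 1) (by norm_num) x

theorem norm_add_eq_of_disjoint {x y : lp E 1} (h : ∀ i, x i = 0 ∨ y i = 0) :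
    ‖x + y‖ = ‖x‖ + ‖y‖ := by
  have hpointwise : ∀ i, ‖(x + y) i‖ = ‖x i‖ + ‖y i‖ := fun i => by
    rcases h i with hx | hy
    · simp [hx]
    · simp [hy]
  refine (hasSum_norm_one (x + y)).unique ?_
  simpa only [hpointwise] using (hasSum_norm_one x).add (hasSum_norm_one y)

variable [DecidableEq ι]

theorem norm_single_sub_single_of_ne {i j : ι} (hij : i ≠ j) (a : E i) (b : E j) :
    ‖lp.single 1 i a - lp.single 1 j b‖ = ‖a‖ + ‖b‖ := by
  have hdisj : ∀ k, lp.single 1 i a k = 0 ∨ (-lp.single 1 j b) k = 0 := fun k => by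
    by_cases hk : k = i
    · subst hk
      exact Or.inr (by simp [Pi.single_eq_of_ne hij])
    · exact Or.inl (by simp [Pi.single_eq_of_ne hk])
  rw [sub_eq_add_neg, norm_add_eq_of_disjoint hdisj, norm_neg, lp.norm_single one_pos,
    lp.norm_single one_pos]

variable [NontriviallyNormedField 𝕜] [∀ i, NormedSpace 𝕜 (E i)]
  [NormedAddCommGroup F] [NormedSpace 𝕜 F]

theorem opNorm_le_of_forall_single (f : lp E 1 →L[𝕜] F) {C : ℝ} (hC : 0 ≤ C)
    (h : ∀ i (a : E i), ‖f (lp.single 1 i a)‖ ≤ C * ‖a‖) : ‖f‖ ≤ C := by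
  refine f.opNorm_le_bound hC fun x => ?_
  have hfx : HasSum (fun i => f (lp.single 1 i (x i))) (f x) :=
    (lp.hasSum_single ENNReal.one_ne_top x).mapL f
  have hbound : HasSum (fun i => C * ‖x i‖) (C * ‖x‖) := (hasSum_norm_one x).mul_left C
  have hsum : Summable fun i => ‖f (lp.single 1 i (x i))‖ :=
    hbound.summable.of_nonneg_of_le (fun _ => norm_nonneg _) fun i => h i (x i)
  calc ‖f x‖ = ‖∑' i, f (lp.single 1 i (x i))‖ := by rw [hfx.tsum_eq]
    _ ≤ ∑' i, ‖f (lp.single 1 i (x i))‖ := norm_tsum_le_tsum_norm hsum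
    _ ≤ C * ‖x‖ := hasSum_le (fun i => h i (x i)) hsum.hasSum hbound

theorem exists_lt_norm_apply_single [Nonempty ι] (f : lp (fun _ : ι => 𝕜) 1 →L[𝕜] F) {r : ℝ}
    (hr : r < ‖f‖) : ∃ i, r < ‖f (lp.single 1 i 1)‖ := by
  by_contra! h
  have hr₀ : 0 ≤ r := (norm_nonneg _).trans (h (Classical.arbitrary ι))
  refine hr.not_ge (opNorm_le_of_forall_single f hr₀ fun i a => ?_)
  have hsingle : lp.single (E := fun _ : ι => 𝕜) 1 i a = a • lp.single 1 i 1 := by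
    rw [← lp.single_smul, smul_eq_mul, mul_one]
  calc ‖f (lp.single 1 i a)‖ = ‖f (lp.single 1 i 1)‖ * ‖a‖ := by
        rw [hsingle, map_smul, norm_smul, mul_comm]
    _ ≤ r * ‖a‖ := mul_le_mul_of_nonneg_right (h i) (norm_nonneg a)

end lp

section SignedBasis

variable {ι : Type*} [DecidableEq ι]

theorem norm_lp_single_one_sub_single_eq_two {m n : ι} {s : ℝ} (hs : |s| = 1)
    (hne : lp.single 1 m s ≠ lp.single (E := fun _ : ι => ℝ) 1 n 1) :
    ‖lp.single (E := fun _ : ι => ℝ) 1 n 1 - lp.single 1 m s‖ = 2 := by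
  rcases eq_or_ne n m with rfl | hnm
  · have hs' : s = -1 := ((abs_eq zero_le_one).mp hs).resolve_left (by rintro rfl; exact hne rfl)
    rw [← lp.single_sub, lp.norm_single one_pos, hs']
    norm_num
  · rw [lp.norm_single_sub_single_of_ne hnm, norm_one, Real.norm_eq_abs, hs]
    norm_num

theorem exists_lp_single_mem_ballSlice [Nonempty ι] (f : lp (fun _ : ι => ℝ) 1 →L[ℝ] ℝ) (hf : ‖f‖ = 1)
    {α : ℝ} (hα : 0 < α) : ∃ m, ∃ s : ℝ, |s| = 1 ∧ lp.single 1 m s ∈ ballSlice f α := by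
  obtain ⟨m, hm⟩ := lp.exists_lt_norm_apply_single f (r := 1 - α) (by linarith)
  have hnorm : ∀ s : ℝ, |s| = 1 → ‖lp.single (E := fun _ : ι => ℝ) 1 m s‖ ≤ 1 := fun s hs => by
    rw [lp.norm_single one_pos, Real.norm_eq_abs, hs]
  rcases lt_abs.mp hm with hpos | hneg
  · exact ⟨m, 1, abs_one, hnorm 1 abs_one, hpos⟩
  · refine ⟨m, -1, by simp, hnorm (-1) (by simp), ?_⟩
    rwa [lp.single_neg, map_neg]

end SignedBasis

/-- Every element of the unit vector basis of `ℓ₁` is a `∇`-point of the unit ball of `ℓ₁`. -/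
theorem isNablaPoint_lp_single (n : ℕ) :
    IsNablaPoint (lp.single (E := fun _ : ℕ => ℝ) 1 n 1) := by
  refine ⟨by simp [lp.norm_single one_pos], fun f α hf hα hx ε hε => ?_⟩
  obtain ⟨m, s, hs, hy⟩ := exists_lp_single_mem_ballSlice f hf hα
  refine ⟨_, hy, ?_⟩
  rw [norm_lp_single_one_sub_single_eq_two hs fun h => hx (h ▸ hy)]
  linarith
end

section
/- For every n ∈ ℕ and every choice of signs θ ∈ {-1,1}ⁿ, the point Σ_{i=1}^n θ_i e_i is a ∇-point of the unit ball of ℓ∞ⁿ. -/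
/-!
A norm-one functional `f` on `ℓ∞ⁿ` attains its norm at the sign vector `y` with
`yᵢ = sign f(eᵢ)`, so `y` lies in every slice `S(f, α)`. If the sign vector `θ` is not in
that slice, then `y ≠ θ`; two distinct sign vectors differ by `±2` in some coordinate, hence
`‖θ - y‖ = 2`.
-/

open scoped ENNReal

variable {X : Type*} [NormedAddCommGroup X] [NormedSpace ℝ X]

section SignVectors

variable {ι : Type*} [Fintype ι]

theorem pi_norm_eq_one_of_signs [Nonempty ι] {x : ι → ℝ} (hx : ∀ i, x i = 1 ∨ x i = -1) :
    ‖x‖ = 1 := by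
  apply le_antisymm
  · refine (pi_norm_le_iff_of_nonneg zero_le_one).2 fun i => ?_
    rw [Real.norm_eq_abs, (abs_eq zero_le_one).2 (hx i)]
  · have hle := norm_le_pi_norm x (Classical.arbitrary ι)
    rwa [Real.norm_eq_abs, (abs_eq zero_le_one).2 (hx _)] at hle

theorem pi_norm_sub_eq_two_of_signs {x y : ι → ℝ} (hx : ∀ i, x i = 1 ∨ x i = -1)
    (hy : ∀ i, y i = 1 ∨ y i = -1) (hxy : x ≠ y) : ‖x - y‖ = 2 := by
  obtain ⟨j, hj⟩ := Function.ne_iff.1 hxy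
  have : Nonempty ι := ⟨j⟩
  apply le_antisymm
  · calc ‖x - y‖ ≤ ‖x‖ + ‖y‖ := norm_sub_le x y
      _ = 2 := by rw [pi_norm_eq_one_of_signs hx, pi_norm_eq_one_of_signs hy]; norm_num
  · have hcoord : ‖(x - y) j‖ = 2 := by
      rw [Pi.sub_apply, Real.norm_eq_abs]
      rcases hx j with h₁ | h₁ <;> rcases hy j with h₂ | h₂ <;>
        simp_all <;> norm_num
    exact hcoord ▸ norm_le_pi_norm (x - y) j

theorem apply_eq_sum_mul_apply_single [DecidableEq ι] (f : (ι → ℝ) →L[ℝ] ℝ) (z : ι → ℝ) :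
    f z = ∑ i, z i * f (Pi.single i 1) := by
  conv_lhs => rw [pi_eq_sum_univ' z]
  simp only [map_sum, map_smul, smul_eq_mul]

theorem opNorm_le_sum_abs_apply_single [DecidableEq ι] (f : (ι → ℝ) →L[ℝ] ℝ) :
    ‖f‖ ≤ ∑ i, |f (Pi.single i 1)| := by
  refine ContinuousLinearMap.opNorm_le_bound _ (by positivity) fun z => ?_
  rw [apply_eq_sum_mul_apply_single f z, Real.norm_eq_abs, Finset.sum_mul]
  refine (Finset.abs_sum_le_sum_abs _ _).trans (Finset.sum_le_sum fun i _ => ?_)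
  rw [abs_mul, mul_comm]
  exact mul_le_mul_of_nonneg_left (by simpa using norm_le_pi_norm z i) (abs_nonneg _)

theorem exists_signs_opNorm_le_apply (f : (ι → ℝ) →L[ℝ] ℝ) :
    ∃ y : ι → ℝ, (∀ i, y i = 1 ∨ y i = -1) ∧ ‖f‖ ≤ f y := by
  classical
  set a : ι → ℝ := fun i => f (Pi.single i 1)
  refine ⟨fun i => if a i < 0 then -1 else 1, fun i => ?_, ?_⟩
  · dsimp only
    split_ifs <;> simp
  · refine (opNorm_le_sum_abs_apply_single f).trans_eq ?_
    rw [apply_eq_sum_mul_apply_single f]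
    refine Finset.sum_congr rfl fun i _ => ?_
    split_ifs with h
    · rw [abs_of_neg h, neg_one_mul]
    · rw [abs_of_nonneg (not_lt.1 h), one_mul]

end SignVectors

/-- For every `n ∈ ℕ`, `n ≥ 1`, and every choice of signs `θ ∈ {-1, 1}ⁿ`, the point
`∑ θ i • e i` (that is, the vector `θ` itself) is a `∇`-point of the unit ball of `ℓ∞ⁿ`,
i.e. of `ℝⁿ` with the supremum norm. -/
theorem isNablaPoint_signs_pi (n : ℕ) (hn : 0 < n) (θ : Fin n → ℝ)
    (hθ : ∀ i, θ i = 1 ∨ θ i = -1) :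
    IsNablaPoint θ := by
  have : Nonempty (Fin n) := Fin.pos_iff_nonempty.1 hn
  refine ⟨pi_norm_eq_one_of_signs hθ, fun f α hf hα hθS ε hε => ?_⟩
  obtain ⟨y, hy, hfy⟩ := exists_signs_opNorm_le_apply f
  have hyS : y ∈ ballSlice f α := ⟨(pi_norm_eq_one_of_signs hy).le, by linarith⟩
  have hθy : θ ≠ y := fun h => hθS (h ▸ hyS)
  exact ⟨y, hyS, by rw [pi_norm_sub_eq_two_of_signs hθ hy hθy]; linarith⟩
end

section
/- Let X, Y be Banach spaces, x ∈ S_X, y ∈ S_Y, and a,b > 0 with a+b = 1. If (ax, by) is a ∇-point in X ⊕₁ Y, then both x and y are Daugavet points. -/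
open scoped ENNReal

variable {X : Type*} [NormedAddCommGroup X] [NormedSpace ℝ X]

/-!
Test slices of `B_X` against the functional `f ∘ fst` on `X ⊕₁ Y`. Shrinking the slice parameter
below `b` keeps `(a x, b y)` out of it, so the `∇`-property yields `(u, v)` in the slice far from
`(a x, b y)`. Since `f u > a`, the mass of `(u, v)` sits mostly in `u`, and the distance can only be
large if `‖a x - u‖ ≈ a + ‖u‖`, i.e. if `u / ‖u‖` is almost antipodal to `x`. The second coordinate
follows by swapping the factors.
-/

section Slices

lemma ContinuousLinearMap.apply_le_norm {f : X →L[ℝ] ℝ} (hf : ‖f‖ ≤ 1) (v : X) : f v ≤ ‖v‖ :=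
  (le_abs_self _).trans <| by simpa using f.le_of_opNorm_le hf v

lemma inv_norm_smul_mem_ballSlice {f : X →L[ℝ] ℝ} {α : ℝ} {u : X} (hu : u ∈ ballSlice f α)
    (hfu : 0 < f u) : ‖u‖⁻¹ • u ∈ ballSlice f α := by
  have hu0 : 0 < ‖u‖ := norm_pos_iff.2 fun h ↦ by simp [h] at hfu
  refine ⟨by rw [norm_smul, norm_inv, norm_norm, inv_mul_cancel₀ hu0.ne'], ?_⟩
  rw [map_smul, smul_eq_mul]
  calc 1 - α < f u := hu.2
    _ ≤ ‖u‖⁻¹ * f u := le_mul_of_one_le_left hfu.le (one_le_inv₀ hu0 |>.2 hu.1)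

variable {Y : Type*} [NormedAddCommGroup Y] [NormedSpace ℝ Y]

lemma IsNablaPoint.map {x : X} (h : IsNablaPoint x) (e : X ≃ₗᵢ[ℝ] Y) : IsNablaPoint (e x) := by
  refine ⟨by rw [e.norm_map, h.1], fun f α hf hα hx ε hε ↦ ?_⟩
  have hmem : ∀ w : X, e w ∈ ballSlice f α ↔ w ∈ ballSlice (f.comp (e : X →L[ℝ] Y)) α := by
    intro w
    simp [ballSlice, e.norm_map]
  obtain ⟨w, hw, hdist⟩ := h.2 _ α (by rw [f.opNorm_comp_linearIsometryEquiv, hf]) hα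
    (fun hx' ↦ hx ((hmem x).2 hx')) ε hε
  exact ⟨e w, (hmem w).2 hw, by rwa [← map_sub, e.norm_map]⟩

end Slices

section ProdLp

variable {𝕜 : Type*} [NontriviallyNormedField 𝕜] {p : ℝ≥0∞} [Fact (1 ≤ p)]
  {E : Type*} [NormedAddCommGroup E] [NormedSpace 𝕜 E]
  {F : Type*} [NormedAddCommGroup F] [NormedSpace 𝕜 F]
  {G : Type*} [NormedAddCommGroup G] [NormedSpace 𝕜 G]

lemma WithLp.opNorm_comp_fstL (f : E →L[𝕜] G) : ‖f.comp (WithLp.fstL p 𝕜 E F)‖ = ‖f‖ := by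
  refine le_antisymm (ContinuousLinearMap.opNorm_le_bound _ (norm_nonneg f) fun w ↦ ?_)
    (ContinuousLinearMap.opNorm_le_bound _ (norm_nonneg _) fun u ↦ ?_)
  · exact (f.le_opNorm w.fst).trans (by gcongr; exact WithLp.norm_fst_le E w)
  · simpa [WithLp.norm_toLp_fst] using
      (f.comp (WithLp.fstL p 𝕜 E F)).le_opNorm (WithLp.toLp p (u, (0 : F)))

end ProdLp

/-- Replacing `u` by `a • (u / ‖u‖)` moves it by exactly `‖u‖ - a`. -/
lemma norm_smul_sub_le_of_le_norm {a : ℝ} (ha : 0 < a) {u : X} (hau : a ≤ ‖u‖) (x : X) :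
    ‖a • x - u‖ ≤ a * ‖x - ‖u‖⁻¹ • u‖ + (‖u‖ - a) := by
  have hu0 : 0 < ‖u‖ := ha.trans_le hau
  have hshift : u - a • ‖u‖⁻¹ • u = (1 - a * ‖u‖⁻¹) • u := by
    rw [smul_smul, sub_smul, one_smul]
  have hcoef : 0 ≤ 1 - a * ‖u‖⁻¹ := by
    rw [sub_nonneg, ← div_eq_mul_inv, div_le_one hu0]; exact hau
  calc ‖a • x - u‖ = ‖a • (x - ‖u‖⁻¹ • u) - (u - a • ‖u‖⁻¹ • u)‖ := by
        rw [smul_sub]; abel_nf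
    _ ≤ ‖a • (x - ‖u‖⁻¹ • u)‖ + ‖u - a • ‖u‖⁻¹ • u‖ := norm_sub_le _ _
    _ = a * ‖x - ‖u‖⁻¹ • u‖ + (‖u‖ - a) := by
        rw [hshift, norm_smul, norm_smul, Real.norm_of_nonneg ha.le, Real.norm_of_nonneg hcoef,
          sub_mul, one_mul, mul_assoc, inv_mul_cancel₀ hu0.ne', mul_one]

section ProdL1

variable {Y : Type*} [NormedAddCommGroup Y] [NormedSpace ℝ Y]

lemma IsNablaPoint.isDaugavetPoint_of_toLp_smul {x : X} {y : Y} (hx : ‖x‖ = 1) (hy : ‖y‖ ≤ 1)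
    {a b : ℝ} (ha : 0 < a) (hb : 0 < b) (hab : a + b = 1)
    (h : IsNablaPoint (WithLp.toLp 1 (a • x, b • y))) : IsDaugavetPoint x := by
  refine ⟨hx, fun f α hf hα ε hε ↦ ?_⟩
  set F := f.comp (WithLp.fstL 1 ℝ X Y)
  have hF : ‖F‖ = 1 := by rw [WithLp.opNorm_comp_fstL, hf]
  have hz : WithLp.toLp 1 (a • x, b • y) ∉ ballSlice F (min α b) := fun hz ↦ by
    have hfx : f (a • x) ≤ a := by
      simpa [norm_smul, hx, abs_of_pos ha] using f.apply_le_norm hf.le (a • x)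
    have hFz : 1 - min α b < f (a • x) := hz.2
    linarith [min_le_right α b]
  obtain ⟨w, hw, hdist⟩ := h.2 F _ hF (lt_min hα hb) hz (a * ε) (by positivity)
  have hfu : 1 - min α b < f w.fst := hw.2
  have hwu : ‖w.fst‖ + ‖w.snd‖ ≤ 1 := (WithLp.prod_norm_eq_of_L1 w).symm.le.trans hw.1
  have hau : a ≤ ‖w.fst‖ := by
    linarith [f.apply_le_norm hf.le w.fst, min_le_right α b]
  have hsnd : ‖b • y - w.snd‖ ≤ b + ‖w.snd‖ := by
    calc ‖b • y - w.snd‖ ≤ b * ‖y‖ + ‖w.snd‖ := by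
          simpa [norm_smul, abs_of_pos hb] using norm_sub_le (b • y) w.snd
      _ ≤ b + ‖w.snd‖ := by gcongr; exact mul_le_of_le_one_right hb.le hy
  rw [WithLp.prod_norm_eq_of_L1] at hdist
  simp only [WithLp.sub_fst, WithLp.sub_snd, WithLp.toLp_fst, WithLp.toLp_snd] at hdist
  refine ⟨‖w.fst‖⁻¹ • w.fst, inv_norm_smul_mem_ballSlice ⟨hwu.trans' ?_, ?_⟩ ?_, ?_⟩
  · linarith [norm_nonneg w.snd]
  · linarith [min_le_left α b]
  · linarith [min_le_right α b]
  · have hnormalize := norm_smul_sub_le_of_le_norm ha hau x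
    exact lt_of_mul_lt_mul_left (by linarith) ha.le

end ProdL1

theorem isDaugavetPoint_of_isNablaPoint_prodL1_general
    {X : Type*} [NormedAddCommGroup X] [NormedSpace ℝ X]
    {Y : Type*} [NormedAddCommGroup Y] [NormedSpace ℝ Y]
    {x : X} {y : Y} (hx : ‖x‖ = 1) (hy : ‖y‖ = 1)
    {a b : ℝ} (ha : 0 < a) (hb : 0 < b) (hab : a + b = 1)
    (h : IsNablaPoint ((WithLp.equiv 1 (X × Y)).symm (a • x, b • y))) :
    IsDaugavetPoint x ∧ IsDaugavetPoint y :=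
  ⟨h.isDaugavetPoint_of_toLp_smul hx hy.le ha hb hab,
    (h.map (LinearIsometryEquiv.withLpProdComm 1 ℝ X Y)).isDaugavetPoint_of_toLp_smul hy hx.le
      hb ha ((add_comm b a).trans hab)⟩

/-- If `x ∈ S_X`, `y ∈ S_Y`, `a, b > 0` with `a + b = 1`, and `(a • x, b • y)` is a `∇`-point
in `X ⊕₁ Y`, then both `x` and `y` are Daugavet points. -/
theorem isDaugavetPoint_of_isNablaPoint_prodL1
    {X : Type*} [NormedAddCommGroup X] [NormedSpace ℝ X] [CompleteSpace X]
    {Y : Type*} [NormedAddCommGroup Y] [NormedSpace ℝ Y] [CompleteSpace Y]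
    {x : X} {y : Y} (hx : ‖x‖ = 1) (hy : ‖y‖ = 1)
    {a b : ℝ} (ha : 0 < a) (hb : 0 < b) (hab : a + b = 1)
    (h : IsNablaPoint ((WithLp.equiv 1 (X × Y)).symm (a • x, b • y))) :
    IsDaugavetPoint x ∧ IsDaugavetPoint y :=
  isDaugavetPoint_of_isNablaPoint_prodL1_general hx hy ha hb hab h
end

section
/- Let K be an infinite compact Hausdorff space. If f ∈ S_{C(K)} does not attain its norm at an accumulation point of K, then f is not a ∇-point of B_{C(K)}. -/
open scoped ENNReal

variable {X : Type*} [NormedAddCommGroup X] [NormedSpace ℝ X]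

/-! Every point where `|f| = 1` is isolated, so the peak set `F = {|f| = 1}` is finite and clopen
and, `K` being infinite, `|f| ≤ m < 1` on the nonempty compact set `Fᶜ`, with `m = |f t₀|`.
Let `w` agree with `f` on `F` and equal a sign `±1` opposite to `f t₀` off `F`. The average
`φ` of the functionals `w x • δ_x` over `S = F ∪ {t₀}` has norm one (attained at `w`). The slice
`{φ > 1 - 1/(2|S|)}` misses `f` because of the `t₀` term, while every `g` in it satisfies
`|f - g| < 1/2` on `F`, hence `‖f - g‖ ≤ 1 + m < 2`. -/

open Set Filter Topology

lemma not_isNablaPoint_of_forall_norm_sub_le {x : X} {φ : X →L[ℝ] ℝ} {α r : ℝ} (hφ : ‖φ‖ = 1)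
    (hα : 0 < α) (hx : x ∉ ballSlice φ α) (hr : r < 2)
    (hS : ∀ y ∈ ballSlice φ α, ‖x - y‖ ≤ r) : ¬ IsNablaPoint x := by
  rintro ⟨-, hN⟩
  obtain ⟨y, hy, hxy⟩ := hN φ α hφ hα hx (2 - r) (by linarith)
  linarith [hS y hy]

section IsolatedPoints

variable {K : Type*} [TopologicalSpace K]

lemma isOpen_singleton_of_not_accPt {x : K} (hx : ¬AccPt x (𝓟 univ)) : IsOpen ({x} : Set K) := by
  rwa [isOpen_singleton_iff_punctured_nhds, ← not_neBot, ← inf_top_eq (𝓝[≠] x), ← principal_univ]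

lemma isOpen_of_forall_not_accPt {s : Set K} (hs : ∀ x ∈ s, ¬AccPt x (𝓟 univ)) : IsOpen s :=
  isOpen_iff_forall_mem_open.2 fun x hx =>
    ⟨{x}, singleton_subset_iff.2 hx, isOpen_singleton_of_not_accPt (hs x hx), rfl⟩

lemma IsCompact.finite_of_forall_not_accPt {s : Set K} (hs : IsCompact s)
    (h : ∀ x ∈ s, ¬AccPt x (𝓟 univ)) : s.Finite := by
  obtain ⟨t, -, hst⟩ := hs.elim_nhds_subcover (fun x => {x}) fun x hx =>
    (isOpen_singleton_of_not_accPt (h x hx)).mem_nhds rfl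
  exact (t.finite_toSet.biUnion fun x _ => finite_singleton x).subset hst

end IsolatedPoints

namespace ContinuousMap

variable {K : Type*} [TopologicalSpace K]

noncomputable def averageEvalCLM (S : Finset K) (w : C(K, ℝ)) : C(K, ℝ) →L[ℝ] ℝ :=
  (S.card : ℝ)⁻¹ • ∑ x ∈ S, w x • evalCLM ℝ x

variable {S : Finset K} {w g : C(K, ℝ)}

lemma averageEvalCLM_apply : averageEvalCLM S w g = (S.card : ℝ)⁻¹ * ∑ x ∈ S, w x * g x := by
  simp [averageEvalCLM]

lemma card_mul_one_sub_averageEvalCLM (hS : S.Nonempty) :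
    S.card * (1 - averageEvalCLM S w g) = ∑ x ∈ S, (1 - w x * g x) := by
  have hcard : (S.card : ℝ) ≠ 0 := by exact_mod_cast hS.card_pos.ne'
  rw [averageEvalCLM_apply, Finset.sum_sub_distrib, Finset.sum_const, nsmul_one, mul_sub,
    mul_inv_cancel_left₀ hcard, mul_one]

variable [CompactSpace K]

lemma abs_apply_le_one (hw : ‖w‖ ≤ 1) (x : K) : |w x| ≤ 1 :=
  (Real.norm_eq_abs _ ▸ w.norm_coe_le_norm x).trans hw

lemma apply_mul_apply_le_one (hw : ‖w‖ ≤ 1) (hg : ‖g‖ ≤ 1) (x : K) :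
    w x * g x ≤ 1 :=
  (le_abs_self _).trans <| abs_mul (w x) (g x) ▸
    mul_le_one₀ (abs_apply_le_one hw x) (abs_nonneg _) (abs_apply_le_one hg x)

lemma one_sub_apply_mul_le_card_mul (hw : ‖w‖ ≤ 1) (hg : ‖g‖ ≤ 1) {x : K} (hx : x ∈ S) :
    1 - w x * g x ≤ S.card * (1 - averageEvalCLM S w g) := by
  rw [card_mul_one_sub_averageEvalCLM ⟨x, hx⟩]
  exact Finset.single_le_sum (f := fun y => 1 - w y * g y)
    (fun y _ => sub_nonneg.2 (apply_mul_apply_le_one hw hg y)) hx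

lemma averageEvalCLM_apply_le_one (hS : S.Nonempty) (hw : ‖w‖ ≤ 1) (hg : ‖g‖ ≤ 1) :
    averageEvalCLM S w g ≤ 1 := by
  obtain ⟨x, hx⟩ := hS
  have hcard : (0 : ℝ) < S.card := by exact_mod_cast Finset.card_pos.2 ⟨x, hx⟩
  exact sub_nonneg.1 <| nonneg_of_mul_nonneg_right ((sub_nonneg.2
    (apply_mul_apply_le_one hw hg x)).trans (one_sub_apply_mul_le_card_mul hw hg hx)) hcard

lemma norm_averageEvalCLM (hS : S.Nonempty) (hw : ‖w‖ ≤ 1) (hwS : ∀ x ∈ S, |w x| = 1) :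
    ‖averageEvalCLM S w‖ = 1 := by
  refine le_antisymm (ContinuousLinearMap.opNorm_le_of_unit_norm zero_le_one fun g hg => ?_) ?_
  · have hneg := averageEvalCLM_apply_le_one hS hw (g := -g) (by rw [norm_neg, hg])
    rw [map_neg] at hneg
    exact abs_le.2 ⟨by linarith, averageEvalCLM_apply_le_one hS hw hg.le⟩
  · have hww : averageEvalCLM S w w = 1 := by
      have h := card_mul_one_sub_averageEvalCLM hS (w := w) (g := w)
      rw [Finset.sum_eq_zero fun x hx => by rw [← sq, ← sq_abs, hwS x hx, one_pow, sub_self],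
        mul_eq_zero, sub_eq_zero] at h
      exact h.resolve_left (by exact_mod_cast hS.card_pos.ne') |>.symm
    calc (1 : ℝ) = ‖averageEvalCLM S w w‖ := by rw [hww, norm_one]
      _ ≤ ‖averageEvalCLM S w‖ * ‖w‖ := ContinuousLinearMap.le_opNorm _ _
      _ ≤ ‖averageEvalCLM S w‖ := mul_le_of_le_one_right (ContinuousLinearMap.opNorm_nonneg _) hw

lemma card_mul_one_sub_lt_of_mem_ballSlice (hS : S.Nonempty)
    (hg : g ∈ ballSlice (averageEvalCLM S w) (2 * S.card)⁻¹) :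
    S.card * (1 - averageEvalCLM S w g) < 1 / 2 := by
  have hcard : (0 : ℝ) < S.card := by exact_mod_cast hS.card_pos
  calc _ < S.card * (2 * S.card : ℝ)⁻¹ := by gcongr; linarith [hg.2]
    _ = 1 / 2 := by field_simp

lemma notMem_ballSlice_averageEvalCLM {f : C(K, ℝ)} (hw : ‖w‖ ≤ 1) (hf : ‖f‖ ≤ 1) {x : K}
    (hx : x ∈ S) (hwf : w x * f x ≤ 0) :
    f ∉ ballSlice (averageEvalCLM S w) (2 * S.card)⁻¹ := fun hf_mem => by
  linarith [one_sub_apply_mul_le_card_mul hw hf hx,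
    card_mul_one_sub_lt_of_mem_ballSlice ⟨x, hx⟩ hf_mem]

lemma abs_sub_apply_lt_of_mem_ballSlice (hw : ‖w‖ ≤ 1)
    (hg : g ∈ ballSlice (averageEvalCLM S w) (2 * S.card)⁻¹) {x : K} (hx : x ∈ S)
    (hwx : |w x| = 1) : |w x - g x| < 1 / 2 := by
  have hsq : w x * w x = 1 := by rw [← sq, ← sq_abs, hwx, one_pow]
  have heq : |w x - g x| = 1 - w x * g x := by
    rw [show w x - g x = w x * (1 - w x * g x) by linear_combination (g x) * hsq, abs_mul, hwx,
      one_mul, abs_of_nonneg (sub_nonneg.2 (apply_mul_apply_le_one hw hg.1 x))]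
  linarith [one_sub_apply_mul_le_card_mul hw hg.1 hx,
    card_mul_one_sub_lt_of_mem_ballSlice ⟨x, hx⟩ hg]

lemma exists_eqOn_abs_eq_one_mul_nonpos {F : Set K} (hF : IsClopen F) {f : C(K, ℝ)}
    (hf : ‖f‖ ≤ 1) {t₀ : K} (ht₀ : t₀ ∉ F) :
    ∃ w : C(K, ℝ), ‖w‖ ≤ 1 ∧ EqOn w f F ∧ |w t₀| = 1 ∧ w t₀ * f t₀ ≤ 0 := by
  classical
  obtain ⟨s, hs, hsf⟩ : ∃ s : ℝ, |s| = 1 ∧ s * f t₀ ≤ 0 := by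
    rcases le_total (f t₀) 0 with h | h
    · exact ⟨1, abs_one, by linarith⟩
    · exact ⟨-1, by simp, by linarith⟩
  let w : C(K, ℝ) := ⟨F.piecewise f fun _ => s,
    (map_continuous f).piecewise (by simp [hF.frontier_eq]) continuous_const⟩
  have hw_on : EqOn w f F := fun t ht => piecewise_eq_of_mem F f (fun _ => s) ht
  have hw_off : ∀ t ∉ F, w t = s := fun t ht => piecewise_eq_of_notMem F f (fun _ => s) ht
  refine ⟨w, (norm_le _ zero_le_one).2 fun t => ?_, hw_on, by rw [hw_off t₀ ht₀, hs],
    by rwa [hw_off t₀ ht₀]⟩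
  by_cases ht : t ∈ F
  · rw [hw_on ht]
    exact (f.norm_coe_le_norm t).trans hf
  · rw [hw_off t ht, Real.norm_eq_abs, hs]

end ContinuousMap

open ContinuousMap

theorem not_isNablaPoint_of_norm_attained_only_at_isolated_general
    {K : Type*} [TopologicalSpace K] [CompactSpace K] [Infinite K]
    (f : C(K, ℝ)) (hf : ‖f‖ = 1)
    (h : ∀ x : K, |f x| = 1 → ¬ AccPt x (Filter.principal Set.univ)) :
    ¬ IsNablaPoint f := by
  classical
  set F : Set K := {x | |f x| = 1}
  have hF_open : IsOpen F := isOpen_of_forall_not_accPt h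
  have hF_closed : IsClosed F := isClosed_eq (map_continuous f).abs continuous_const
  have hF_finite : F.Finite := hF_closed.isCompact.finite_of_forall_not_accPt h
  obtain ⟨t₀, ht₀, ht₀_max⟩ := hF_open.isClosed_compl.isCompact.exists_isMaxOn
    hF_finite.infinite_compl.nonempty (map_continuous f).abs.continuousOn
  obtain ⟨w, hw, hwf, hwt₀, hwft₀⟩ :=
    exists_eqOn_abs_eq_one_mul_nonpos ⟨hF_closed, hF_open⟩ hf.le ht₀
  set S := insert t₀ hF_finite.toFinset
  have hwS : ∀ x ∈ S, |w x| = 1 := by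
    simp only [S, Finset.forall_mem_insert, Set.Finite.mem_toFinset]
    exact ⟨hwt₀, fun x hx => (hwf hx).symm ▸ hx⟩
  have hft₀ : |f t₀| < 1 := (abs_apply_le_one hf.le t₀).lt_of_ne ht₀
  refine not_isNablaPoint_of_forall_norm_sub_le (r := 1 + |f t₀|)
    (norm_averageEvalCLM (Finset.insert_nonempty _ _) hw hwS) (by positivity)
    (notMem_ballSlice_averageEvalCLM hw hf.le (Finset.mem_insert_self _ _) hwft₀) (by linarith)
    fun g hg => (norm_le _ (by positivity)).2 fun t => ?_
  rw [coe_sub, Pi.sub_apply, Real.norm_eq_abs]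
  by_cases ht : t ∈ F
  · have hS : t ∈ S := Finset.mem_insert_of_mem (hF_finite.mem_toFinset.2 ht)
    rw [← hwf ht]
    linarith [abs_sub_apply_lt_of_mem_ballSlice hw hg hS (hwS t hS), abs_nonneg (f t₀)]
  · calc |f t - g t| ≤ |f t| + |g t| := abs_sub _ _
      _ ≤ |f t₀| + 1 := add_le_add (ht₀_max ht) (abs_apply_le_one hg.1 t)
      _ = 1 + |f t₀| := add_comm _ _

/-- If `K` is an infinite compact Hausdorff space and `f ∈ S_{C(K)}` does not attain its norm
at an accumulation point of `K`, then `f` is not a `∇`-point of the unit ball of `C(K)`. -/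
theorem not_isNablaPoint_of_norm_attained_only_at_isolated
    {K : Type*} [TopologicalSpace K] [CompactSpace K] [T2Space K] [Infinite K]
    (f : C(K, ℝ)) (hf : ‖f‖ = 1)
    (h : ∀ x : K, |f x| = 1 → ¬ AccPt x (Filter.principal Set.univ)) :
    ¬ IsNablaPoint f :=
  not_isNablaPoint_of_norm_attained_only_at_isolated_general f hf h
end

section
/- Let X and Y be Banach spaces. If x ∈ S_X is a Daugavet point and y ∈ S_Y is a ∇-point, then the elementary tensor x ⊗ y is a Daugavet point in the projective tensor product X ⊗̂_π Y. -/
/-!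
Pick an elementary tensor `u ⊗ v` in the slice `S(G, α)`. If `u ⊗ y` is still in it, the Daugavet
property of `x` for the slice of `a ↦ G (a ⊗ y)` gives `u'` with `‖x - u'‖ ≈ 2` and
`u' ⊗ y ∈ S(G, α)`, and the projective norm is a cross norm, so `‖x ⊗ y - u' ⊗ y‖ = ‖x - u'‖`.
Otherwise `y` lies outside the slice of `b ↦ G (u ⊗ b)`, which the `∇`-property turns into `v'`
in that slice with `‖y - v'‖ ≈ 2`; the Daugavet property of `x` for the slice of
`a ↦ -G (a ⊗ v')` then gives `w` with `‖x - w‖ ≈ 2` and `(-w) ⊗ v' ∈ S(G, α)`. Testing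
`x ⊗ y + w ⊗ v'` against the tensor product of functionals norming `x - w` and `y - v'` shows
that its norm is `≈ 2`.
-/

open scoped ENNReal

variable {X : Type*} [NormedAddCommGroup X] [NormedSpace ℝ X]

/-- `m : X →L[ℝ] Y →L[ℝ] Z` realizes `Z` as the projective tensor product `X ⊗̂_π Y`:
the closed unit ball of `Z` is the closed convex hull of the elementary tensors of the unit
balls, and every bounded bilinear form on `X × Y` lifts to a functional on `Z` of the same
norm. -/
structure IsProjTensorProduct
    {X Y Z : Type*} [NormedAddCommGroup X] [NormedSpace ℝ X]
    [NormedAddCommGroup Y] [NormedSpace ℝ Y]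
    [NormedAddCommGroup Z] [NormedSpace ℝ Z]
    (m : X →L[ℝ] Y →L[ℝ] Z) : Prop where
  ball_eq : Metric.closedBall (0 : Z) 1 =
    closure (convexHull ℝ {z : Z | ∃ x y, ‖x‖ ≤ 1 ∧ ‖y‖ ≤ 1 ∧ z = m x y})
  lift : ∀ B : X →L[ℝ] Y →L[ℝ] ℝ, ∃ g : Z →L[ℝ] ℝ, ‖g‖ = ‖B‖ ∧ ∀ x y, g (m x y) = B x y

theorem ContinuousLinearMap.abs_apply_le_opNorm (f : X →L[ℝ] ℝ) {u : X} (hu : ‖u‖ ≤ 1) :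
    |f u| ≤ ‖f‖ := by
  simpa using f.le_opNorm_of_le hu

theorem ContinuousLinearMap.apply_le_norm_of_opNorm_le_one {f : X →L[ℝ] ℝ} (hf : ‖f‖ ≤ 1)
    (u : X) : f u ≤ ‖u‖ :=
  (le_abs_self _).trans (by simpa using f.le_of_opNorm_le hf u)

theorem ContinuousLinearMap.exists_norm_le_one_lt_apply (f : X →L[ℝ] ℝ) {r : ℝ}
    (hr : r < ‖f‖) : ∃ u, ‖u‖ ≤ 1 ∧ r < f u := by
  obtain ⟨u, hu, hru⟩ := f.exists_lt_apply_of_lt_opNorm hr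
  rcases le_or_gt 0 (f u) with h | h
  · exact ⟨u, hu.le, by rwa [Real.norm_of_nonneg h] at hru⟩
  · refine ⟨-u, by rw [norm_neg]; exact hu.le, ?_⟩
    rwa [map_neg, ← Real.norm_of_nonpos h.le]

theorem exists_ballSlice_eq [Nontrivial X] {φ : X →L[ℝ] ℝ} {r : ℝ} {u : X} (hu : ‖u‖ ≤ 1)
    (hr : r < φ u) : ∃ f α, ‖f‖ = 1 ∧ 0 < α ∧ ballSlice f α = {w | ‖w‖ ≤ 1 ∧ r < φ w} := by
  rcases eq_or_ne φ 0 with rfl | hφ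
  · -- the set is then the whole ball, which is the slice of any norm-one functional with `α = 3`
    obtain ⟨f, hf, -⟩ := exists_dual_vector' ℝ u
    refine ⟨f, 3, hf, by norm_num, Set.ext fun w => and_congr_right fun hw => ?_⟩
    have := (abs_le.1 ((f.abs_apply_le_opNorm hw).trans hf.le)).1
    simp only [zero_apply] at hr ⊢
    constructor <;> intro <;> linarith
  · have hφpos : 0 < ‖φ‖ := norm_pos_iff.2 hφ
    have hru : r < ‖φ‖ := hr.trans_le ((le_abs_self _).trans (φ.abs_apply_le_opNorm hu))
    refine ⟨‖φ‖⁻¹ • φ, 1 - r / ‖φ‖, norm_smul_inv_norm hφ, ?_,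
      Set.ext fun w => and_congr_right fun _ => ?_⟩
    · rwa [sub_pos, div_lt_one hφpos]
    · rw [sub_sub_cancel, smul_apply, smul_eq_mul, div_eq_inv_mul,
        mul_lt_mul_iff_right₀ (inv_pos.2 hφpos)]

theorem IsDaugavetPoint.exists_lt_norm_sub_of_lt_apply {x : X} (hx : IsDaugavetPoint x)
    {φ : X →L[ℝ] ℝ} {r : ℝ} {u : X} (hu : ‖u‖ ≤ 1) (hr : r < φ u) {ε : ℝ} (hε : 0 < ε) :
    ∃ u', ‖u'‖ ≤ 1 ∧ r < φ u' ∧ 2 - ε < ‖x - u'‖ := by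
  have : Nontrivial X := nontrivial_of_ne x 0 (norm_ne_zero_iff.1 (by simp [hx.1]))
  obtain ⟨f, α, hf, hα, hS⟩ := exists_ballSlice_eq hu hr
  obtain ⟨u', hu', hxu'⟩ := hx.2 f α hf hα ε hε
  rw [hS] at hu'
  exact ⟨u', hu'.1, hu'.2, hxu'⟩

theorem IsNablaPoint.exists_lt_norm_sub_of_lt_apply {y : X} (hy : IsNablaPoint y)
    {φ : X →L[ℝ] ℝ} {r : ℝ} {v : X} (hv : ‖v‖ ≤ 1) (hr : r < φ v) (hry : φ y ≤ r) {ε : ℝ}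
    (hε : 0 < ε) : ∃ v', ‖v'‖ ≤ 1 ∧ r < φ v' ∧ 2 - ε < ‖y - v'‖ := by
  have : Nontrivial X := nontrivial_of_ne y 0 (norm_ne_zero_iff.1 (by simp [hy.1]))
  obtain ⟨f, α, hf, hα, hS⟩ := exists_ballSlice_eq hv hr
  obtain ⟨v', hv', hyv'⟩ := hy.2 f α hf hα (by rw [hS]; exact fun h => hry.not_gt h.2) ε hε
  rw [hS] at hv'
  exact ⟨v', hv'.1, hv'.2, hyv'⟩

namespace IsProjTensorProduct

variable {Y Z : Type*} [NormedAddCommGroup Y] [NormedSpace ℝ Y]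
  [NormedAddCommGroup Z] [NormedSpace ℝ Z] {m : X →L[ℝ] Y →L[ℝ] Z}

theorem opNorm_le_one (hm : IsProjTensorProduct m) : ‖m‖ ≤ 1 := by
  refine ContinuousLinearMap.opNorm_le_of_unit_norm zero_le_one fun a ha =>
    ContinuousLinearMap.opNorm_le_of_unit_norm zero_le_one fun b hb => ?_
  rw [← mem_closedBall_zero_iff, hm.ball_eq]
  exact subset_closure (subset_convexHull ℝ _ ⟨a, b, ha.le, hb.le, rfl⟩)

theorem norm_apply_le (hm : IsProjTensorProduct m) (a : X) (b : Y) : ‖m a b‖ ≤ ‖a‖ * ‖b‖ :=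
  (m.le_opNorm₂ a b).trans <| by
    simpa using mul_le_mul_of_nonneg_right
      (mul_le_mul_of_nonneg_right hm.opNorm_le_one (norm_nonneg a)) (norm_nonneg b)

theorem exists_apply_eq_mul (hm : IsProjTensorProduct m) {f : X →L[ℝ] ℝ} {g : Y →L[ℝ] ℝ}
    (hf : ‖f‖ ≤ 1) (hg : ‖g‖ ≤ 1) : ∃ G : Z →L[ℝ] ℝ, ‖G‖ ≤ 1 ∧ ∀ a b, G (m a b) = f a * g b := by
  obtain ⟨G, hG, hGm⟩ := hm.lift (f.smulRight g)
  refine ⟨G, ?_, fun a b => by simp [hGm]⟩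
  rw [hG, ContinuousLinearMap.norm_smulRight_apply]
  exact mul_le_one₀ hf (norm_nonneg g) hg

theorem norm_apply (hm : IsProjTensorProduct m) (a : X) (b : Y) : ‖m a b‖ = ‖a‖ * ‖b‖ := by
  refine le_antisymm (hm.norm_apply_le a b) ?_
  obtain ⟨f, hf, hfa⟩ := exists_dual_vector'' ℝ a
  obtain ⟨g, hg, hgb⟩ := exists_dual_vector'' ℝ b
  obtain ⟨G, hG, hGm⟩ := hm.exists_apply_eq_mul hf hg
  calc ‖a‖ * ‖b‖ = G (m a b) := by rw [hGm, hfa, hgb]; rfl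
    _ ≤ ‖m a b‖ := ContinuousLinearMap.apply_le_norm_of_opNorm_le_one hG _

theorem norm_sub_add_norm_sub_le (hm : IsProjTensorProduct m) {a c : X} {b d : Y}
    (ha : ‖a‖ ≤ 1) (hc : ‖c‖ ≤ 1) (hb : ‖b‖ ≤ 1) (hd : ‖d‖ ≤ 1) :
    ‖a - c‖ + ‖b - d‖ - 2 ≤ ‖m a b + m c d‖ := by
  obtain ⟨f, hf, hfac⟩ := exists_dual_vector'' ℝ (a - c)
  obtain ⟨g, hg, hgbd⟩ := exists_dual_vector'' ℝ (b - d)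
  obtain ⟨G, hG, hGm⟩ := hm.exists_apply_eq_mul hf hg
  have hGab := ContinuousLinearMap.apply_le_norm_of_opNorm_le_one hG (m a b + m c d)
  rw [map_add, hGm, hGm] at hGab
  rw [map_sub, RCLike.ofReal_real_eq_id, id] at hfac hgbd
  obtain ⟨-, hfa⟩ := abs_le.1 ((f.abs_apply_le_opNorm ha).trans hf)
  obtain ⟨hfc, -⟩ := abs_le.1 ((f.abs_apply_le_opNorm hc).trans hf)
  obtain ⟨-, hgb⟩ := abs_le.1 ((g.abs_apply_le_opNorm hb).trans hg)
  obtain ⟨hgd, -⟩ := abs_le.1 ((g.abs_apply_le_opNorm hd).trans hg)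
  -- all four values lie in `[-1, 1]`, so `f a * g b ≥ f a + g b - 1`, `f c * g d ≥ -f c - g d - 1`
  nlinarith [mul_nonneg (sub_nonneg.2 hfa) (sub_nonneg.2 hgb),
    mul_nonneg (neg_le_iff_add_nonneg.1 hfc) (neg_le_iff_add_nonneg.1 hgd)]

theorem exists_lt_apply (hm : IsProjTensorProduct m) (G : Z →L[ℝ] ℝ) {r : ℝ} (hr : r < ‖G‖) :
    ∃ a b, ‖a‖ ≤ 1 ∧ ‖b‖ ≤ 1 ∧ r < G (m a b) := by
  obtain ⟨z, hz, hrz⟩ := G.exists_norm_le_one_lt_apply hr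
  by_contra! h
  have hball : Metric.closedBall (0 : Z) 1 ⊆ {w | G w ≤ r} := by
    rw [hm.ball_eq]
    refine closure_minimal (convexHull_min ?_ (convex_halfSpace_le G.toLinearMap.isLinear r))
      (isClosed_le G.continuous continuous_const)
    rintro _ ⟨a, b, ha, hb, rfl⟩
    exact h a b ha hb
  exact (hball (mem_closedBall_zero_iff.2 hz)).not_gt hrz

end IsProjTensorProduct

theorem isDaugavetPoint_tmul_of_daugavet_nabla_general
    {X Y Z : Type*} [NormedAddCommGroup X] [NormedSpace ℝ X]
    [NormedAddCommGroup Y] [NormedSpace ℝ Y]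
    [NormedAddCommGroup Z] [NormedSpace ℝ Z]
    (m : X →L[ℝ] Y →L[ℝ] Z) (hm : IsProjTensorProduct m)
    {x : X} {y : Y} (hx : IsDaugavetPoint x) (hy : IsNablaPoint y) :
    IsDaugavetPoint (m x y) := by
  refine ⟨by rw [hm.norm_apply, hx.1, hy.1, one_mul], fun G α hG hα ε hε => ?_⟩
  obtain ⟨u, v, hu, hv, huv⟩ := hm.exists_lt_apply G (r := 1 - α) (by linarith)
  by_cases hGuy : 1 - α < G (m u y)
  · obtain ⟨u', hu', hGu', hxu'⟩ :=
      hx.exists_lt_norm_sub_of_lt_apply (φ := G.comp (m.flip y)) hu hGuy hε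
    refine ⟨m u' y, ⟨by simpa [hm.norm_apply, hy.1] using hu', hGu'⟩, ?_⟩
    rwa [← ContinuousLinearMap.map_sub₂, hm.norm_apply, hy.1, mul_one]
  · obtain ⟨v', hv', hGv', hyv'⟩ := hy.exists_lt_norm_sub_of_lt_apply (φ := G.comp (m u))
      hv huv (not_lt.1 hGuy) (half_pos hε)
    obtain ⟨w, hw, hGw, hxw⟩ := hx.exists_lt_norm_sub_of_lt_apply
      (φ := -G.comp (m.flip v')) (u := -u) (by rwa [norm_neg]) (by simpa using hGv') (half_pos hε)
    refine ⟨m (-w) v', ⟨?_, by simpa using hGw⟩, ?_⟩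
    · rw [hm.norm_apply, norm_neg]
      exact mul_le_one₀ hw (norm_nonneg _) hv'
    · have := hm.norm_sub_add_norm_sub_le hx.1.le hw hy.1.le hv'
      rw [ContinuousLinearMap.map_neg₂, sub_neg_eq_add]
      linarith

/-- If `x ∈ S_X` is a Daugavet point and `y ∈ S_Y` is a `∇`-point, then the elementary tensor
`x ⊗ y` is a Daugavet point in the projective tensor product `X ⊗̂_π Y`. -/
theorem isDaugavetPoint_tmul_of_daugavet_nabla
    {X Y Z : Type*} [NormedAddCommGroup X] [NormedSpace ℝ X] [CompleteSpace X]
    [NormedAddCommGroup Y] [NormedSpace ℝ Y] [CompleteSpace Y]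
    [NormedAddCommGroup Z] [NormedSpace ℝ Z] [CompleteSpace Z]
    (m : X →L[ℝ] Y →L[ℝ] Z) (hm : IsProjTensorProduct m)
    {x : X} {y : Y} (hx : IsDaugavetPoint x) (hy : IsNablaPoint y) :
    IsDaugavetPoint (m x y) :=
  isDaugavetPoint_tmul_of_daugavet_nabla_general m hm hx hy
end
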